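/- Let n be even, let J = [[0, −Id],[Id, 0]] ∈ gl(n,ℝ), let ℒ be a real symplectic decomposition of ℂ^n, let (m_L)_{L∈ℒ} ⊂ (1/2)ℤ^d, and let Ψ(θ) = Σ_{L∈ℒ} e^{2πi⟨m_L,θ⟩}P_L. Then Ψ(θ) ∈ Sp(n,ℝ) for every θ ∈ ℝ^d if and only if: (i) m_L = −m_{L̄} for every L ∈ ℒ, and (ii) whenever L, L' ∈ ℒ satisfy ⟨L, JL'⟩ ≠ 0, one has m_L = m_{L'}. -/

import Mathlib

open scoped BigOperators
open MeasureTheory Matrix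

noncomputable section

attribute [local instance] Matrix.linftyOpNormedAddCommGroup Matrix.linftyOpNormedSpace

/-- Iterated partial derivative with multi-index `α`. -/
def mpd {d : ℕ} {E : Type*} [NormedAddCommGroup E] [NormedSpace ℝ E]
    (α : Fin d → ℕ) (f : (Fin d → ℝ) → E) : (Fin d → ℝ) → E :=
  (List.finRange d).foldr
    (fun i g =>
      (fun (h : (Fin d → ℝ) → E) (θ : Fin d → ℝ) => fderiv ℝ h θ (Pi.single i 1))^[α i] g) f

/-- The quantity whose supremum over `p = (α, θ)` is the Gevrey-2 norm `‖f‖_r`. -/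
def gevreyQ {d : ℕ} {E : Type*} [NormedAddCommGroup E] [NormedSpace ℝ E]
    (r : ℝ) (f : (Fin d → ℝ) → E) (p : (Fin d → ℕ) × (Fin d → ℝ)) : ℝ :=
  r ^ (2 * ∑ i, p.1 i) / ((∏ i, Nat.factorial (p.1 i) : ℕ) : ℝ) ^ 2 * ‖mpd p.1 f p.2‖

/-- `‖f‖_r ≤ M`. -/
def GevreyLe {d : ℕ} {E : Type*} [NormedAddCommGroup E] [NormedSpace ℝ E]
    (r : ℝ) (f : (Fin d → ℝ) → E) (M : ℝ) : Prop :=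
  ∀ p, gevreyQ r f p ≤ M

/-- The Gevrey-2 norm of `f` is finite. -/
def GevreyFinite {d : ℕ} {E : Type*} [NormedAddCommGroup E] [NormedSpace ℝ E]
    (r : ℝ) (f : (Fin d → ℝ) → E) : Prop :=
  BddAbove (Set.range (gevreyQ r f))

/-- The Gevrey-2 norm `‖f‖_r`. -/
def gevreyNorm {d : ℕ} {E : Type*} [NormedAddCommGroup E] [NormedSpace ℝ E]
    (r : ℝ) (f : (Fin d → ℝ) → E) : ℝ :=
  ⨆ p, gevreyQ r f p

/-- `ℤ^d`-periodicity (function on the torus `𝕋^d`). -/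
def Per1 {d : ℕ} {E : Type*} (f : (Fin d → ℝ) → E) : Prop :=
  ∀ (θ : Fin d → ℝ) (k : Fin d → ℤ), f (θ + fun i => (k i : ℝ)) = f θ

/-- `2ℤ^d`-periodicity (function on the double torus `2𝕋^d`). -/
def Per2 {d : ℕ} {E : Type*} (f : (Fin d → ℝ) → E) : Prop :=
  ∀ (θ : Fin d → ℝ) (k : Fin d → ℤ), f (θ + fun i => 2 * (k i : ℝ)) = f θ

/-- The character `e^{2πi⟨m/2,θ⟩}` attached to the half-integer vector `m/2`, `m ∈ ℤ^d`. -/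
def eHalf {d : ℕ} (m : Fin d → ℤ) (θ : Fin d → ℝ) : ℂ :=
  Complex.exp ((2 * Real.pi * Complex.I) * ∑ i, ((m i : ℂ) / 2) * (θ i : ℂ))

/-- `|m/2| = |m₁|/2 + ⋯ + |m_d|/2` for a half-integer vector `m/2`. -/
def hnorm {d : ℕ} (m : Fin d → ℤ) : ℝ := (∑ i, |(m i : ℝ)|) / 2

/-- Fourier coefficient `f̂(m/2) = 2^{-d}∫_{[0,2]^d} f(θ)e^{-2πi⟨m/2,θ⟩}dθ`. -/
def fourierC {d n : ℕ} (f : (Fin d → ℝ) → Matrix (Fin n) (Fin n) ℂ) (m : Fin d → ℤ) :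
    Matrix (Fin n) (Fin n) ℂ :=
  ((2 : ℝ) ^ d)⁻¹ • ∫ θ in Set.Icc (0 : Fin d → ℝ) (fun _ => 2), eHalf (-m) θ • f θ

/-- Truncation of `f` at order `N`: `f^N = Σ_{|m|≤N} f̂(m)e^{2πi⟨m,·⟩}`. -/
def truncN {d n : ℕ} (N : ℕ) (f : (Fin d → ℝ) → Matrix (Fin n) (Fin n) ℂ) :
    (Fin d → ℝ) → Matrix (Fin n) (Fin n) ℂ :=
  fun θ => ∑ m ∈ (Finset.Icc (fun _ => -(2 * (N : ℤ))) (fun _ => (2 * (N : ℤ)))).filter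
      (fun m : Fin d → ℤ => hnorm m ≤ N),
    eHalf m θ • fourierC f m

/-- `ω` is Diophantine with constant `κ` and exponent `τ`. -/
def IsDioph {d : ℕ} (ω : Fin d → ℝ) (κ τ : ℝ) : Prop :=
  ∀ m : Fin d → ℤ, m ≠ 0 → κ / (∑ i, |(m i : ℝ)|) ^ τ ≤ |∑ i, (m i : ℝ) * ω i|

/-- `A` has `DC^N_ω(κ',τ)` spectrum. -/
def DCspec {d n : ℕ} (ω : Fin d → ℝ) (N : ℕ) (κ' τ : ℝ)
    (A : Matrix (Fin n) (Fin n) ℂ) : Prop :=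
  ∀ α ∈ spectrum ℂ A, ∀ β ∈ spectrum ℂ A, ∀ m : Fin d → ℤ, m ≠ 0 → hnorm m ≤ N →
    κ' / hnorm m ^ τ ≤
      ‖α - β - (2 * Real.pi * Complex.I) * ∑ i, ((m i : ℂ) / 2) * (ω i : ℂ)‖

/-- The trivial map `Φ(θ) = Σ_L e^{2πi⟨m_L,θ⟩}P_L` attached to a decomposition. -/
def PhiTriv {d n s : ℕ} (P : Fin s → Matrix (Fin n) (Fin n) ℂ)
    (m : Fin s → Fin d → ℤ) (θ : Fin d → ℝ) : Matrix (Fin n) (Fin n) ℂ :=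
  ∑ L, eHalf (m L) θ • P L

/-- `F` has good periodicity properties w.r.t. the decomposition `P` and the family `m`:
`Φ⁻¹FΦ` is `ℤ^d`-periodic. -/
def GoodPer {d n s : ℕ} (F : (Fin d → ℝ) → Matrix (Fin n) (Fin n) ℂ)
    (P : Fin s → Matrix (Fin n) (Fin n) ℂ) (m : Fin s → Fin d → ℤ) : Prop :=
  Per1 (fun θ => PhiTriv P (fun L => -(m L)) θ * F θ * PhiTriv P m θ)

/-- Directional derivative `∂_ω f`. -/
def dOm {d : ℕ} {E : Type*} [NormedAddCommGroup E] [NormedSpace ℝ E]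
    (ω : Fin d → ℝ) (f : (Fin d → ℝ) → E) (θ : Fin d → ℝ) : E :=
  fderiv ℝ f θ ω

/-- The standard symplectic matrix `J = [[0,-Id],[Id,0]]` on `ℂ^{k+k}`. -/
def Jmat (k : ℕ) : Matrix (Fin (k + k)) (Fin (k + k)) ℂ :=
  Matrix.reindex finSumFinEquiv finSumFinEquiv (Matrix.fromBlocks 0 (-1) 1 0)

/-- The Hermitian inner product on `ℂ^n`, antilinear in the second variable. -/
def herm {n : ℕ} (u v : Fin n → ℂ) : ℂ := ∑ i, u i * (starRingEnd ℂ) (v i)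

/-- `⟨L,JL'⟩ ≠ 0` for the subspaces `L = ran P_L`, `L' = ran P_{L'}`. -/
def pairNZ {n s : ℕ} (J : Matrix (Fin n) (Fin n) ℂ)
    (P : Fin s → Matrix (Fin n) (Fin n) ℂ) (L L' : Fin s) : Prop :=
  ∃ u v : Fin n → ℂ, herm (P L *ᵥ u) (J *ᵥ (P L' *ᵥ v)) ≠ 0

/-! Since the `P_L` are complete orthogonal idempotents, `Ψ(θ) P_L = e_L(θ) P_L` with
`e_L(θ) = e^{2πi⟨m_L,θ⟩}`, and coefficients with respect to the nonzero `P_L` are unique.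
Complex conjugation sends `Σ c_L P_L` to `Σ c̄_L P_{L̄}`, so `Ψ` is real iff `ē_{L̄} = e_L`,
i.e. `m_{L̄} = -m_L`. Sandwiching `ΨᵀJΨ = J` between `P_Lᵀ` and `P_M` shows that `Ψ` is
symplectic iff `e_L e_M = 1` whenever `P_Lᵀ J P_M ≠ 0`, and `P_Lᵀ J P_{L̄'} ≠ 0` says exactly
`⟨L, JL'⟩ ≠ 0`. Finally, a character `θ ↦ e^{2πi⟨m,θ⟩}` is identically `1` only for `m = 0`. -/

namespace OrthogonalIdempotents

variable {R A ι : Type*} [CommRing R] [Ring A] [Algebra R A] [Fintype ι] {e : ι → A}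

theorem sum_smul_mul (he : OrthogonalIdempotents e) (c : ι → R) (i : ι) :
    (∑ j, c j • e j) * e i = c i • e i := by
  classical
  simp [Finset.sum_mul, he.mul_eq]

theorem sum_smul_eq_sum_smul_iff [IsCancelMulZero R] [Module.IsTorsionFree R A]
    (he : OrthogonalIdempotents e) (hne : ∀ i, e i ≠ 0) {c c' : ι → R} :
    ∑ i, c i • e i = ∑ i, c' i • e i ↔ c = c' := by
  refine ⟨fun h => funext fun i => ?_, fun h => h ▸ rfl⟩
  rw [← smul_left_inj (hne i), ← he.sum_smul_mul, h, he.sum_smul_mul]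

end OrthogonalIdempotents

namespace Matrix

variable {N R ι : Type*} [Fintype ι]

theorem map_conj_eq_self_iff {M : Matrix N N ℂ} :
    M.map (starRingEnd ℂ) = M ↔ ∀ i j, (M i j).im = 0 := by
  simp only [← Complex.conj_eq_iff_im, ← Matrix.ext_iff, map_apply]

theorem map_sum_smul_of_involutive [CommSemiring R] [StarRing R] {P : ι → Matrix N N R}
    {σ : ι → ι} (hσ : Function.Involutive σ)
    (hconj : ∀ i, P (σ i) = (P i).map (starRingEnd R)) (c : ι → R) :
    (∑ i, c i • P i).map (starRingEnd R) = ∑ i, starRingEnd R (c (σ i)) • P i := by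
  have hmap : (∑ i, c i • P i).map (starRingEnd R) = ∑ i, starRingEnd R (c i) • P (σ i) := by
    ext a b
    simp [sum_apply, hconj]
  rw [hmap, ← Equiv.sum_comp (hσ.toPerm σ)]
  simp [hσ _]

theorem exists_dotProduct_mulVec_ne_zero_iff [Fintype N] [DecidableEq N] [Semiring R]
    {M : Matrix N N R} : (∃ u v, u ⬝ᵥ M *ᵥ v ≠ 0) ↔ M ≠ 0 := by
  refine ⟨fun ⟨u, v, h⟩ hM => by simp [hM] at h, fun hM => ?_⟩
  obtain ⟨i, j, hij⟩ : ∃ i j, M i j ≠ 0 := by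
    by_contra! h
    exact hM (ext h)
  exact ⟨Pi.single i 1, Pi.single j 1, by simpa [single_one_dotProduct] using hij⟩

theorem eq_iff_forall_transpose_mul_mul_eq [Fintype N] [DecidableEq N] [CommRing R]
    {P : ι → Matrix N N R} (hsum : ∑ i, P i = 1) {X Y : Matrix N N R} :
    X = Y ↔ ∀ i j, (P i)ᵀ * X * P j = (P i)ᵀ * Y * P j := by
  refine ⟨fun h _ _ => h ▸ rfl, fun h => ?_⟩
  have expand : ∀ Z : Matrix N N R, Z = ∑ i, ∑ j, (P i)ᵀ * Z * P j := fun Z => by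
    simp only [← Finset.sum_mul, ← Finset.mul_sum, ← transpose_sum, hsum, transpose_one,
      Matrix.one_mul, Matrix.mul_one]
  rw [expand X, expand Y]
  simp only [h]

theorem transpose_sum_smul_mul_mul_sum_smul_eq_iff [Fintype N] [DecidableEq N] [CommRing R]
    {P : ι → Matrix N N R} (hP : CompleteOrthogonalIdempotents P) (c : ι → R)
    (J : Matrix N N R) :
    (∑ i, c i • P i)ᵀ * J * (∑ i, c i • P i) = J ↔
      ∀ i j, (c i * c j) • ((P i)ᵀ * J * P j) = (P i)ᵀ * J * P j := by
  rw [eq_iff_forall_transpose_mul_mul_eq hP.complete]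
  refine forall₂_congr fun i j => ?_
  have sandwich : (P i)ᵀ * ((∑ i, c i • P i)ᵀ * J * (∑ i, c i • P i)) * P j
      = ((∑ i, c i • P i) * P i)ᵀ * J * ((∑ i, c i • P i) * P j) := by
    simp only [transpose_mul, Matrix.mul_assoc]
  rw [sandwich, hP.sum_smul_mul, hP.sum_smul_mul, transpose_smul]
  simp only [smul_mul_assoc, mul_smul_comm, smul_smul, mul_comm (c j)]

end Matrix

theorem eHalf_add {d : ℕ} (a b : Fin d → ℤ) (θ : Fin d → ℝ) :
    eHalf (a + b) θ = eHalf a θ * eHalf b θ := by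
  simp only [eHalf, Pi.add_apply, Int.cast_add, add_div, add_mul, Finset.sum_add_distrib, mul_add,
    Complex.exp_add]

theorem conj_eHalf {d : ℕ} (a : Fin d → ℤ) (θ : Fin d → ℝ) :
    starRingEnd ℂ (eHalf a θ) = eHalf (-a) θ := by
  rw [eHalf, eHalf, ← Complex.exp_conj]
  simp only [map_mul, map_sum, map_div₀, Complex.conj_I, map_ofNat, Complex.conj_ofReal,
    map_intCast, Pi.neg_apply, Int.cast_neg, neg_div, neg_mul, Finset.sum_neg_distrib, mul_neg]

theorem eHalf_eq_one_iff {d : ℕ} {a : Fin d → ℤ} : (∀ θ, eHalf a θ = 1) ↔ a = 0 := by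
  refine ⟨fun h => funext fun i => ?_, fun h θ => by simp [h, eHalf]⟩
  by_contra hi
  have hi' : (a i : ℂ) ≠ 0 := by exact_mod_cast hi
  have h_at := h (Pi.single i (2 * (a i : ℝ))⁻¹)
  have hsum : ∑ j, ((a j : ℂ) / 2) * ((Pi.single i (2 * (a i : ℝ))⁻¹ : Fin d → ℝ) j : ℂ)
      = 1 / 4 := by
    rw [Finset.sum_eq_single i (fun j _ hj => by simp [Pi.single_eq_of_ne hj]) (by simp)]
    push_cast [Pi.single_eq_same]
    field_simp
    ring
  rw [eHalf, hsum, show 2 * (Real.pi : ℂ) * Complex.I * (1 / 4) = Real.pi / 2 * Complex.I by ring,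
    Complex.exp_pi_div_two_mul_I] at h_at
  simp [Complex.ext_iff] at h_at

theorem eHalf_inj {d : ℕ} {a b : Fin d → ℤ} : (∀ θ, eHalf a θ = eHalf b θ) ↔ a = b := by
  rw [← sub_eq_zero, ← eHalf_eq_one_iff]
  refine forall_congr' fun θ => ?_
  have hb : eHalf b θ ≠ 0 := Complex.exp_ne_zero _
  have hsplit : eHalf a θ = eHalf (a - b) θ * eHalf b θ := by rw [← eHalf_add, sub_add_cancel]
  rw [hsplit, mul_eq_right₀ hb]

theorem herm_mulVec_mulVec {n : ℕ} {ι κ : Type*} [Fintype ι] [Fintype κ]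
    (A : Matrix (Fin n) ι ℂ) (B : Matrix (Fin n) κ ℂ) (u : ι → ℂ) (v : κ → ℂ) :
    herm (A *ᵥ u) (B *ᵥ v) = u ⬝ᵥ (Aᵀ * B.map (starRingEnd ℂ)) *ᵥ star v := by
  have hstar : star (B *ᵥ v) = B.map (starRingEnd ℂ) *ᵥ star v := by
    ext i
    simp [mulVec, dotProduct]
  change (A *ᵥ u) ⬝ᵥ star (B *ᵥ v) = _
  rw [hstar, ← mulVec_mulVec, ← vecMul_transpose]
  exact (dotProduct_mulVec _ _ _).symm

theorem pairNZ_iff {n s : ℕ} (J : Matrix (Fin n) (Fin n) ℂ) (P : Fin s → Matrix (Fin n) (Fin n) ℂ)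
    (L L' : Fin s) : pairNZ J P L L' ↔ (P L)ᵀ * (J * P L').map (starRingEnd ℂ) ≠ 0 := by
  simp only [pairNZ, mulVec_mulVec, herm_mulVec_mulVec, ← exists_dotProduct_mulVec_ne_zero_iff]
  refine exists_congr fun u => ?_
  conv_rhs => rw [star_involutive.surjective.exists]

theorem Jmat_map_conj (k : ℕ) : (Jmat k).map (starRingEnd ℂ) = Jmat k := by
  ext i j
  simp only [Jmat, map_apply, reindex_apply, submatrix_apply]
  rcases finSumFinEquiv.symm i with a | a <;> rcases finSumFinEquiv.symm j with b | b <;>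
    simp [fromBlocks, one_apply, apply_ite]

section PhiTriv

variable {d n s : ℕ} {P : Fin s → Matrix (Fin n) (Fin n) ℂ}

theorem PhiTriv_real_iff (hP : OrthogonalIdempotents P) (hne : ∀ L, P L ≠ 0)
    {σ : Fin s → Fin s} (hσ : Function.Involutive σ)
    (hconj : ∀ L, P (σ L) = (P L).map (starRingEnd ℂ)) (m : Fin s → Fin d → ℤ) :
    (∀ θ i j, (PhiTriv P m θ i j).im = 0) ↔ ∀ L, m (σ L) = -(m L) := by
  simp only [← map_conj_eq_self_iff, PhiTriv, map_sum_smul_of_involutive hσ hconj, conj_eHalf,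
    hP.sum_smul_eq_sum_smul_iff hne, funext_iff]
  rw [forall_comm]
  simp only [eHalf_inj, neg_eq_iff_eq_neg, funext_iff]

theorem PhiTriv_symplectic_iff (hP : CompleteOrthogonalIdempotents P)
    (J : Matrix (Fin n) (Fin n) ℂ) (m : Fin s → Fin d → ℤ) :
    (∀ θ, (PhiTriv P m θ)ᵀ * J * PhiTriv P m θ = J) ↔
      ∀ L M, (P L)ᵀ * J * P M ≠ 0 → m L + m M = 0 := by
  simp only [PhiTriv, transpose_sum_smul_mul_mul_sum_smul_eq_iff hP, ← eHalf_add]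
  rw [forall_comm]
  refine forall_congr' fun L => ?_
  rw [forall_comm]
  refine forall_congr' fun M => ?_
  by_cases hQ : (P L)ᵀ * J * P M = 0
  · simp [hQ]
  · simp only [ne_eq, hQ, not_false_eq_true, forall_const, ← eHalf_eq_one_iff]
    refine forall_congr' fun θ => ?_
    conv_lhs => rhs; rw [← one_smul ℂ ((P L)ᵀ * J * P M)]
    exact smul_left_inj hQ

end PhiTriv

theorem stmt_6_general (d k s : ℕ) (P : Fin s → Matrix (Fin (k + k)) (Fin (k + k)) ℂ)
    (hsum : ∑ L, P L = 1)
    (hidem : ∀ L, P L * P L = P L)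
    (horth : ∀ L L', L ≠ L' → P L * P L' = 0)
    (hne : ∀ L, P L ≠ 0)
    (σ : Fin s → Fin s) (hσ : ∀ L, σ (σ L) = L)
    (hconj : ∀ L, P (σ L) = (P L).map (starRingEnd ℂ))
    (m : Fin s → Fin d → ℤ) :
    (∀ θ : Fin d → ℝ,
        (∀ i j, (PhiTriv P m θ i j).im = 0) ∧
        (PhiTriv P m θ)ᵀ * Jmat k * PhiTriv P m θ = Jmat k) ↔
      ((∀ L, m (σ L) = -(m L)) ∧
        ∀ L L', pairNZ (Jmat k) P L L' → m L = m L') := by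
  have hP : CompleteOrthogonalIdempotents P := ⟨⟨hidem, fun L L' h => horth L L' h⟩, hsum⟩
  have hσ' : Function.Involutive σ := hσ
  have hpair : ∀ L L', pairNZ (Jmat k) P L L' ↔ (P L)ᵀ * Jmat k * P (σ L') ≠ 0 := fun L L' => by
    rw [pairNZ_iff, Matrix.map_mul, Jmat_map_conj, ← hconj, Matrix.mul_assoc]
  rw [forall_and, PhiTriv_real_iff hP.toOrthogonalIdempotents hne hσ' hconj m,
    PhiTriv_symplectic_iff hP]
  refine and_congr_right fun hreal => forall_congr' fun L => ?_
  refine hσ'.surjective.forall.trans (forall_congr' fun L' => ?_)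
  rw [hpair, hreal, ← sub_eq_add_neg, sub_eq_zero]

/-- for a real symplectic decomposition of `ℂ^{2k}` the trivial map
`Ψ(θ) = Σ_L e^{2πi⟨m_L,θ⟩}P_L` takes values in `Sp(2k,ℝ)` iff `m_{L̄} = −m_L` for all `L` and
`m_L = m_{L'}` whenever `⟨L,JL'⟩ ≠ 0`. -/
theorem stmt_6 (d k s : ℕ) (P : Fin s → Matrix (Fin (k + k)) (Fin (k + k)) ℂ)
    (hsum : ∑ L, P L = 1)
    (hidem : ∀ L, P L * P L = P L)
    (horth : ∀ L L', L ≠ L' → P L * P L' = 0)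
    (hne : ∀ L, P L ≠ 0)
    (σ : Fin s → Fin s) (hσ : ∀ L, σ (σ L) = L)
    (hconj : ∀ L, P (σ L) = (P L).map (starRingEnd ℂ))
    (hsymp : ∀ L, ∃! L', pairNZ (Jmat k) P L L')
    (m : Fin s → Fin d → ℤ) :
    (∀ θ : Fin d → ℝ,
        (∀ i j, (PhiTriv P m θ i j).im = 0) ∧
        (PhiTriv P m θ)ᵀ * Jmat k * PhiTriv P m θ = Jmat k) ↔
      ((∀ L, m (σ L) = -(m L)) ∧
        ∀ L L', pairNZ (Jmat k) P L L' → m L = m L') :=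
  stmt_6_general d k s P hsum hidem horth hne σ hσ hconj m
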